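/- arXiv:2110.01126 — 3 statements merged into one kernel-verified Lean document; each statement's English description precedes it below -/
import Mathlib

section
/- Let X be an N×N real symmetric positive definite matrix and D a diagonal matrix with 0 ≺ D ≺ 2X^{-1}. Then every eigenvalue λ of the matrix J = I - X·D satisfies |λ| < 1, i.e., the spectral radius of J is strictly less than 1. -/
/-!
If `X D v = μ v` with `v ≠ 0`, put `u = D v`. Then `X u = μ v`, so `u* X u = μ · v* D v`; both
quadratic forms are positive, hence `μ` is a positive real. Moreover `X⁻¹ v = μ⁻¹ u`, so
`0 < v* (2X⁻¹ - D) v = (2/μ - 1) · v* D v`, i.e. `μ < 2`. The eigenvalues of `J = I - X D` are the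
numbers `1 - μ`, which therefore lie in `(-1, 1)`.
-/

open Matrix

open scoped ComplexOrder

namespace Matrix

variable {n : Type*} [Fintype n]

lemma re_star_dotProduct_map_ofReal_mulVec (M : Matrix n n ℝ) (z : n → ℂ) :
    (star z ⬝ᵥ (M.map Complex.ofReal *ᵥ z)).re =
      (fun i ↦ (z i).re) ⬝ᵥ (M *ᵥ fun i ↦ (z i).re) +
        (fun i ↦ (z i).im) ⬝ᵥ (M *ᵥ fun i ↦ (z i).im) := by
  simp only [dotProduct, mulVec, Finset.mul_sum, Complex.re_sum, ← Finset.sum_add_distrib]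
  refine Finset.sum_congr rfl fun i _ ↦ Finset.sum_congr rfl fun j _ ↦ ?_
  simp

lemma PosDef.map_ofReal {M : Matrix n n ℝ} (hM : M.PosDef) : (M.map Complex.ofReal).PosDef := by
  have hH : (M.map Complex.ofReal).IsHermitian := hM.isHermitian.map _ fun _ ↦ by simp
  refine PosDef.of_dotProduct_mulVec_pos hH fun z hz ↦ ?_
  refine Complex.lt_def.mpr ⟨?_, (hH.im_star_dotProduct_mulVec_self z).symm⟩
  have hpos {x : n → ℝ} (hx : x ≠ 0) : 0 < x ⬝ᵥ (M *ᵥ x) := by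
    simpa using hM.dotProduct_mulVec_pos hx
  have hnonneg (x : n → ℝ) : 0 ≤ x ⬝ᵥ (M *ᵥ x) := by
    simpa using hM.posSemidef.dotProduct_mulVec_nonneg x
  rw [Complex.zero_re, re_star_dotProduct_map_ofReal_mulVec]
  have hre_or_im : (fun i ↦ (z i).re) ≠ 0 ∨ (fun i ↦ (z i).im) ≠ 0 := by
    contrapose! hz
    exact funext fun i ↦ Complex.ext (congrFun hz.1 i) (congrFun hz.2 i)
  rcases hre_or_im with hre | him
  · exact add_pos_of_pos_of_nonneg (hpos hre) (hnonneg _)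
  · exact add_pos_of_nonneg_of_pos (hnonneg _) (hpos him)

lemma IsHermitian.star_mulVec_dotProduct {R : Type*} [CommSemiring R] [StarRing R]
    {B : Matrix n n R} (hB : B.IsHermitian) (v : n → R) :
    star (B *ᵥ v) ⬝ᵥ v = star v ⬝ᵥ (B *ᵥ v) := by
  rw [star_mulVec, hB.eq, dotProduct_mulVec]

variable [DecidableEq n]

lemma map_nonsing_inv {α β : Type*} [CommRing α] [CommRing β] (f : α →+* β) {A : Matrix n n α}
    (hA : IsUnit A.det) : A⁻¹.map f = (A.map f)⁻¹ :=
  (inv_eq_left_inv <| by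
    rw [← Matrix.map_mul, nonsing_inv_mul A hA, Matrix.map_one _ f.map_zero f.map_one]).symm

lemma exists_mulVec_eq_smul_of_mem_spectrum {K : Type*} [Field K] {M : Matrix n n K} {μ : K}
    (hμ : μ ∈ spectrum K M) : ∃ v ≠ 0, M *ᵥ v = μ • v := by
  rw [← spectrum_toLin', ← Module.End.hasEigenvalue_iff_mem_spectrum] at hμ
  obtain ⟨v, hv⟩ := hμ.exists_hasEigenvector
  exact ⟨v, hv.2, by simpa using hv.apply_eq_smul⟩

variable {𝕜 : Type*} [RCLike 𝕜] {A B : Matrix n n 𝕜} {μ : 𝕜} {v : n → 𝕜}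

namespace PosDef

lemma pos_of_mul_mulVec_eq_smul (hA : A.PosDef) (hB : B.PosDef) (hv0 : v ≠ 0)
    (hv : (A * B) *ᵥ v = μ • v) : 0 < μ := by
  have hBv : B *ᵥ v ≠ 0 := fun h ↦
    hv0 (mulVec_injective_of_isUnit hB.isUnit (by rwa [mulVec_zero]))
  have hform : star (B *ᵥ v) ⬝ᵥ (A *ᵥ (B *ᵥ v)) = μ * (star v ⬝ᵥ (B *ᵥ v)) := by
    rw [mulVec_mulVec, hv, dotProduct_smul, hB.isHermitian.star_mulVec_dotProduct, smul_eq_mul]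
  have hA_pos := hA.dotProduct_mulVec_pos hBv
  rw [hform] at hA_pos
  exact pos_of_mul_pos_left hA_pos (hB.dotProduct_mulVec_pos hv0).le

lemma lt_of_mul_mulVec_eq_smul (hA : A.PosDef) (hB : B.PosDef) {c : ℝ}
    (hc : (c • A⁻¹ - B).PosDef) (hμ : 0 < μ) (hv0 : v ≠ 0) (hv : (A * B) *ᵥ v = μ • v) :
    μ < c := by
  have hBv : B *ᵥ v = μ • (A⁻¹ *ᵥ v) := by
    rw [← mulVec_smul, ← hv, mulVec_mulVec,
      nonsing_inv_mul_cancel_left _ _ (A.isUnit_iff_isUnit_det.mp hA.isUnit)]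
  have hform : μ * (star v ⬝ᵥ ((c • A⁻¹ - B) *ᵥ v)) = (c - μ) * (star v ⬝ᵥ (B *ᵥ v)) := by
    rw [sub_mulVec, smul_mulVec, dotProduct_sub, dotProduct_smul, hBv, dotProduct_smul]
    simp only [smul_eq_mul, RCLike.real_smul_eq_coe_mul]
    ring
  have hc_pos := mul_pos hμ (hc.dotProduct_mulVec_pos hv0)
  rw [hform] at hc_pos
  exact sub_pos.mp (pos_of_mul_pos_left hc_pos (hB.dotProduct_mulVec_pos hv0).le)

lemma spectrum_mul_subset_Ioo (hA : A.PosDef) (hB : B.PosDef) {c : ℝ}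
    (hc : (c • A⁻¹ - B).PosDef) : spectrum 𝕜 (A * B) ⊆ Set.Ioo 0 (c : 𝕜) := fun μ hμ ↦ by
  obtain ⟨v, hv0, hv⟩ := exists_mulVec_eq_smul_of_mem_spectrum hμ
  have hμ_pos := pos_of_mul_mulVec_eq_smul hA hB hv0 hv
  exact ⟨hμ_pos, lt_of_mul_mulVec_eq_smul hA hB hc hμ_pos hv0 hv⟩

end PosDef

end Matrix

lemma Complex.norm_one_sub_lt_one {z : ℂ} (hz : z ∈ Set.Ioo 0 2) : ‖1 - z‖ < 1 := by
  obtain ⟨hre0, him⟩ := Complex.lt_def.mp hz.1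
  have hre2 := (Complex.lt_def.mp hz.2).1
  have hz_real : z = (z.re : ℂ) := Complex.ext rfl (by simp [← him])
  rw [hz_real, ← Complex.ofReal_one, ← Complex.ofReal_sub, Complex.norm_real, Real.norm_eq_abs,
    abs_lt]
  simp only [Complex.zero_re, Complex.re_ofNat] at hre0 hre2
  constructor <;> linarith

/-- If `X` is symmetric positive definite and `D` is diagonal with
`0 ≺ D ≺ 2X⁻¹`, then every (complex) eigenvalue of `J = I - X·D` has
modulus strictly less than 1. -/
theorem spectral_radius_lt_one {N : ℕ} (X : Matrix (Fin N) (Fin N) ℝ)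
    (hX : X.PosDef) (d : Fin N → ℝ) (hd : ∀ i, 0 < d i)
    (hDX : ((2 : ℝ) • X⁻¹ - Matrix.diagonal d).PosDef) :
    ∀ lam : ℂ,
      lam ∈ spectrum ℂ (((1 : Matrix (Fin N) (Fin N) ℝ)
          - X * Matrix.diagonal d).map Complex.ofReal) →
      ‖lam‖ < 1 := by
  intro lam hlam
  have hJ : ((1 : Matrix (Fin N) (Fin N) ℝ) - X * diagonal d).map Complex.ofReal =
      algebraMap ℂ _ 1 - X.map Complex.ofReal * (diagonal d).map Complex.ofReal := by
    simp only [← Complex.ofRealAm_coe, ← AlgHom.mapMatrix_apply, map_sub, map_mul, map_one]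
  have hc : ((2 : ℝ) • (X.map Complex.ofReal)⁻¹ - (diagonal d).map Complex.ofReal).PosDef := by
    have hXinv : X⁻¹.map Complex.ofReal = (X.map Complex.ofReal)⁻¹ :=
      map_nonsing_inv Complex.ofRealHom hX.det_pos.ne'.isUnit
    have h := hDX.map_ofReal
    rwa [Matrix.map_sub _ fun _ _ ↦ Complex.ofReal_sub _ _,
      Matrix.map_smul _ _ fun _ ↦ by simp [Complex.real_smul], hXinv] at h
  rw [hJ, ← spectrum.singleton_sub_eq] at hlam
  obtain ⟨_, rfl, μ, hμ, rfl⟩ := hlam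
  exact Complex.norm_one_sub_lt_one
    (PosDef.spectrum_mul_subset_Ioo hX.map_ofReal (posDef_diagonal_iff.mpr hd).map_ofReal hc hμ)
end

section
/- Let X be a real symmetric positive definite N×N matrix that is not a scalar multiple of the identity. Then the set S = {D diagonal : 0 ≺ D ≺ 2X^{-1}} strictly contains the cube D_unif = {D diagonal : 0 < D_{ii} < 2/λ_max(X) for all i}; i.e., D_unif ⊆ S and there exists a diagonal D ∈ S with some diagonal entry D_{ii} ≥ 2/λ_max(X). -/
/-!
Write `λ = λ_max(X)`. Since the spectrum of `X⁻¹` is bounded below by `λ⁻¹`, the matrix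
`M = X⁻¹ - λ⁻¹ I` is positive semidefinite, and `2X⁻¹ - D = 2M + (2/λ I - D)`. Hence
`2X⁻¹ - D` is positive definite as soon as `D < 2/λ` entrywise. If `X` is not scalar, the nonzero
positive semidefinite matrix `λI - X` has a positive diagonal entry, i.e. `X_ii < λ` for some `i`,
and `D_ii` may then be raised to `2/λ`: a vector annihilated by both `M` and `2/λ I - D` is a
multiple of `e_i` and a `λ`-eigenvector of `X`, which would force `X_ii = λ`.
-/

open Matrix
open scoped MatrixOrder ComplexOrder

namespace Matrix

lemma two_smul_sub_diagonal_eq {n K : Type*} [Field K] [DecidableEq n] (A : Matrix n n K)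
    (c : K) (d : n → K) :
    (2 : K) • A - diagonal d = (2 : K) • (A - c⁻¹ • 1) + diagonal fun j => 2 / c - d j := by
  rw [smul_sub, smul_smul, ← div_eq_mul_inv, smul_one_eq_diagonal,
    ← diagonal_sub (fun _ => 2 / c) d]
  abel

variable {n 𝕜 : Type*} [Fintype n] [RCLike 𝕜]

lemma PosSemidef.smul_one_sub_of_spectrum_le [DecidableEq n] {A : Matrix n n 𝕜}
    (hA : A.IsHermitian) {c : ℝ} (hc : ∀ μ ∈ spectrum ℝ A, μ ≤ c) : (c • 1 - A).PosSemidef := by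
  have := le_algebraMap_of_spectrum_le hc hA.isSelfAdjoint
  rwa [le_iff, Algebra.algebraMap_eq_smul_one] at this

lemma PosDef.pos_of_mem_spectrum [DecidableEq n] {A : Matrix n n 𝕜} (hA : A.PosDef) {μ : ℝ}
    (hμ : μ ∈ spectrum ℝ A) : 0 < μ := by
  obtain ⟨i, rfl⟩ := (hA.isHermitian.spectrum_real_eq_range_eigenvalues ▸ hμ : _)
  exact hA.eigenvalues_pos i

lemma PosDef.inv_sub_smul_one_of_spectrum_le [DecidableEq n] {A : Matrix n n 𝕜} (hA : A.PosDef)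
    {c : ℝ} (hc : ∀ μ ∈ spectrum ℝ A, μ ≤ c) : (A⁻¹ - c⁻¹ • 1).PosSemidef := by
  obtain ⟨u, rfl⟩ := hA.isUnit
  have hinv : spectrum ℝ (u : Matrix n n 𝕜)⁻¹ = (spectrum ℝ (u : Matrix n n 𝕜))⁻¹ := by
    rw [← coe_units_inv, spectrum.map_inv]
  have := algebraMap_le_of_le_spectrum (r := c⁻¹) (a := (u : Matrix n n 𝕜)⁻¹) ?_
    hA.inv.isHermitian.isSelfAdjoint
  · rwa [le_iff, Algebra.algebraMap_eq_smul_one] at this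
  intro μ hμ
  rw [hinv, Set.mem_inv] at hμ
  simpa using inv_anti₀ (hA.pos_of_mem_spectrum hμ) (hc _ hμ)

lemma PosSemidef.posDef_add_of_ker {A B : Matrix n n 𝕜} (hA : A.PosSemidef) (hB : B.PosSemidef)
    (hker : ∀ x, A *ᵥ x = 0 → B *ᵥ x = 0 → x = 0) : (A + B).PosDef := by
  refine .of_dotProduct_mulVec_pos (hA.isHermitian.add hB.isHermitian) fun x hx => ?_
  rw [add_mulVec, dotProduct_add]
  have hAx := hA.dotProduct_mulVec_nonneg x
  have hBx := hB.dotProduct_mulVec_nonneg x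
  refine (add_nonneg hAx hBx).lt_of_ne' fun h => hx (hker x ?_ ?_)
  · exact (hA.dotProduct_mulVec_zero_iff x).mp ((add_eq_zero_iff_of_nonneg hAx hBx).mp h).1
  · exact (hB.dotProduct_mulVec_zero_iff x).mp ((add_eq_zero_iff_of_nonneg hAx hBx).mp h).2

lemma PosSemidef.exists_diag_lt [DecidableEq n] {A : Matrix n n ℝ} {c : ℝ}
    (hA : (c • 1 - A).PosSemidef) (hne : A ≠ c • 1) : ∃ i, A i i < c := by
  by_contra! h
  have hdiag : ∀ i, (c • 1 - A) i i = 0 := fun i =>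
    le_antisymm (by simpa using h i) hA.diag_nonneg
  have := hA.trace_eq_zero_iff.mp (Finset.sum_eq_zero fun i _ => hdiag i)
  exact hne (sub_eq_zero.mp this).symm

lemma eq_zero_of_mulVec_eq_smul {R : Type*} [Ring R] [NoZeroDivisors R] {A : Matrix n n R}
    {c : R} {x : n → R} {i : n} (hx : A *ᵥ x = c • x) (hsupp : ∀ j ≠ i, x j = 0)
    (hi : A i i ≠ c) : x = 0 := by
  have hxi : A i i * x i = c * x i := by
    have := congrFun hx i
    rwa [Pi.smul_apply, smul_eq_mul, mulVec, dotProduct,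
      Finset.sum_eq_single i (fun j _ hj => by rw [hsupp j hj, mul_zero]) (by simp)] at this
  have : x i = 0 := (mul_eq_mul_right_iff.mp hxi).resolve_left hi
  funext j
  by_cases hj : j = i
  · exact hj ▸ this
  · exact hsupp j hj

lemma mulVec_eq_smul_of_inv_sub_smul_one_mulVec_eq_zero {K : Type*} [Field K] [DecidableEq n]
    {A : Matrix n n K} (hA : IsUnit A.det) {c : K} (hc : c ≠ 0) {x : n → K}
    (hx : (A⁻¹ - c⁻¹ • 1) *ᵥ x = 0) : A *ᵥ x = c • x := by
  rw [sub_mulVec, smul_mulVec, one_mulVec, sub_eq_zero] at hx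
  calc A *ᵥ x = A *ᵥ (c • A⁻¹ *ᵥ x) := by rw [hx, smul_smul, mul_inv_cancel₀ hc, one_smul]
    _ = c • x := by rw [mulVec_smul, mulVec_mulVec, mul_nonsing_inv _ hA, one_mulVec]

variable [DecidableEq n] {X : Matrix n n ℝ} {c : ℝ} {d : n → ℝ}

lemma PosDef.posDef_two_smul_inv_sub_diagonal_of_lt (hX : X.PosDef)
    (hc : ∀ μ ∈ spectrum ℝ X, μ ≤ c) (hd : ∀ j, d j < 2 / c) :
    ((2 : ℝ) • X⁻¹ - diagonal d).PosDef := by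
  rw [two_smul_sub_diagonal_eq X⁻¹ c]
  exact PosDef.posSemidef_add ((hX.inv_sub_smul_one_of_spectrum_le hc).smul zero_le_two)
    (PosDef.diagonal fun j => sub_pos.mpr (hd j))

lemma PosDef.posDef_two_smul_inv_sub_diagonal_of_diag_ne (hX : X.PosDef) (hc₀ : c ≠ 0)
    (hc : ∀ μ ∈ spectrum ℝ X, μ ≤ c) {i : n} (hXi : X i i ≠ c) (hdi : d i ≤ 2 / c)
    (hd : ∀ j ≠ i, d j < 2 / c) : ((2 : ℝ) • X⁻¹ - diagonal d).PosDef := by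
  have hd_le (j : n) : d j ≤ 2 / c := by
    by_cases hj : j = i
    · exact hj ▸ hdi
    · exact (hd j hj).le
  rw [two_smul_sub_diagonal_eq X⁻¹ c]
  refine ((hX.inv_sub_smul_one_of_spectrum_le hc).smul zero_le_two).posDef_add_of_ker
    (PosSemidef.diagonal fun j => sub_nonneg.mpr (hd_le j))
    fun x hMx hDx => eq_zero_of_mulVec_eq_smul ?_ (fun j hj => ?_) hXi
  · rw [smul_mulVec, smul_eq_zero_iff_right two_ne_zero] at hMx
    exact mulVec_eq_smul_of_inv_sub_smul_one_mulVec_eq_zero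
      ((isUnit_iff_isUnit_det X).mp hX.isUnit) hc₀ hMx
  · have := congrFun hDx j
    rw [mulVec_diagonal, Pi.zero_apply] at this
    exact (mul_eq_zero.mp this).resolve_left (sub_pos.mpr (hd j hj)).ne'

end Matrix

/-- If `X` is symmetric positive definite and not a scalar multiple of the
identity, then the set `S = {D diagonal : 0 ≺ D ≺ 2X⁻¹}` strictly contains the
cube `{D diagonal : 0 < D_ii < 2/λ_max(X)}`: the cube is contained in `S`, and
some `D ∈ S` has a diagonal entry `≥ 2/λ_max(X)`. -/
theorem uniform_cube_strict_subset {N : ℕ} (X : Matrix (Fin N) (Fin N) ℝ)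
    (hX : X.PosDef) (hns : ∀ c : ℝ, X ≠ c • (1 : Matrix (Fin N) (Fin N) ℝ))
    (lmax : ℝ) (hmem : lmax ∈ spectrum ℝ X)
    (hmax : ∀ μ ∈ spectrum ℝ X, μ ≤ lmax) :
    (∀ d : Fin N → ℝ, (∀ i, 0 < d i ∧ d i < 2 / lmax) →
        (Matrix.diagonal d).PosDef ∧
        ((2 : ℝ) • X⁻¹ - Matrix.diagonal d).PosDef) ∧
    (∃ d : Fin N → ℝ,
        (Matrix.diagonal d).PosDef ∧
        ((2 : ℝ) • X⁻¹ - Matrix.diagonal d).PosDef ∧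
        ∃ i, 2 / lmax ≤ d i) := by
  have hlmax : 0 < lmax := hX.pos_of_mem_spectrum hmem
  refine ⟨fun d hd => ⟨PosDef.diagonal fun i => (hd i).1,
    hX.posDef_two_smul_inv_sub_diagonal_of_lt hmax fun i => (hd i).2⟩, ?_⟩
  obtain ⟨i, hi⟩ :=
    (PosSemidef.smul_one_sub_of_spectrum_le hX.isHermitian hmax).exists_diag_lt (hns lmax)
  have hhalf : 1 / lmax < 2 / lmax := by gcongr; norm_num
  refine ⟨fun j => if j = i then 2 / lmax else 1 / lmax,
    PosDef.diagonal fun j => by split_ifs <;> positivity,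
    hX.posDef_two_smul_inv_sub_diagonal_of_diag_ne hlmax.ne' hmax hi.ne (by simp)
      fun j hj => by simpa [hj] using hhalf,
    i, by simp⟩
end

section
/- Consider the stacked-ReLU function f(v) = Σ_{j=1}^{m} s^j · ReLU(v + b^j) with b^1 = 0 and b^j ≤ b^{j-1} for j ≥ 2, and partial sums satisfying 0 < Σ_{j=1}^{l} s^j < k for every l = 1,…,m. Then f(v) = 0 for all v ≤ 0, and f is monotonically nondecreasing on ℝ; moreover for any v₂ > v₁ ≥ 0 in the same linear region, (f(v₂) - f(v₁))/(v₂ - v₁) < k. -/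
lemma relu_diff_mono (v₁ v₂ x y : ℝ) (hv : v₁ ≤ v₂) (hxy : x ≤ y) :
    max (v₂ + x) 0 - max (v₁ + x) 0 ≤ max (v₂ + y) 0 - max (v₁ + y) 0 := by
  have e : ∀ a : ℝ, max a 0 = if 0 ≤ a then a else 0 := by
    intro a; split
    · exact max_eq_left ‹_›
    · exact max_eq_right (le_of_not_ge ‹_›)
  simp only [e]; split_ifs <;> linarith

lemma abel_nonneg (s d : ℕ → ℝ) : ∀ n, 0 < n →
    (∀ i j, i ≤ j → j < n → d j ≤ d i) →
    (∀ l, l < n → 0 < ∑ j ∈ Finset.range (l+1), s j) →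
    d (n-1) * ∑ j ∈ Finset.range n, s j ≤ ∑ j ∈ Finset.range n, s j * d j := by
  intro n
  induction n with
  | zero => omega
  | succ n ih =>
    intro _ hd hS
    rcases Nat.eq_zero_or_pos n with rfl | hn
    · simp [Finset.sum_range_one, mul_comm]
    · have IH := ih hn (fun i j hij hj => hd i j hij (by omega))
        (fun l hl => hS l (by omega))
      rw [Finset.sum_range_succ, Finset.sum_range_succ]
      have h1 : d n ≤ d (n-1) := hd (n-1) n (by omega) (by omega)
      have h2 : 0 < ∑ j ∈ Finset.range n, s j := by
        have := hS (n-1) (by omega); rwa [Nat.sub_add_cancel hn] at this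
      have hn1 : n + 1 - 1 = n := rfl
      rw [hn1]
      nlinarith [IH]

lemma sum_range_eq_sum_Iic {m : ℕ} (g : Fin m → ℝ) (l : ℕ) (hl : l < m) :
    ∑ j ∈ Finset.range (l+1), (if h : j < m then g ⟨j,h⟩ else 0)
      = ∑ j ∈ Finset.Iic (⟨l,hl⟩ : Fin m), g j := by
  have h1 : Finset.Iic (⟨l,hl⟩ : Fin m) = Finset.univ.filter (fun j : Fin m => (j:ℕ) ≤ l) := by
    ext j; simp [Fin.le_def]
  rw [h1, Finset.sum_filter]
  have h2 := Fin.sum_univ_eq_sum_range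
    (fun j => if j ≤ l then (if h : j < m then g ⟨j,h⟩ else 0) else 0) m
  have h3 : ∀ i : Fin m,
      (if (i:ℕ) ≤ l then (if h : (i:ℕ) < m then g ⟨i,h⟩ else 0) else 0)
        = (if (i:ℕ) ≤ l then g i else 0) := by
    intro i; rcases le_or_gt (i:ℕ) l with h|h <;> simp [h, i.2, Nat.not_le.mpr, *]
  rw [Finset.sum_congr rfl (fun i _ => h3 i)] at h2
  rw [h2]
  have h4 : Finset.range (l+1) = (Finset.range m).filter (fun j => j ≤ l) := by
    ext j; simp [Nat.lt_succ_iff]; omega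
  rw [h4, Finset.sum_filter]

/-- Stacked-ReLU positive branch: `f(v) = Σ_j s_j ReLU(v + b_j)` with `b_1 = 0`,
`b` nonincreasing, and all partial sums of `s` in `(0, k)`. Then `f` vanishes on
`(-∞, 0]`, is nondecreasing, and its slope on any linear region of `[0,∞)` is
strictly below `k`. -/
theorem stacked_relu_positive_branch {m : ℕ} (hm : 0 < m)
    (s b : Fin m → ℝ) (k : ℝ) (hk : 0 < k)
    (hb1 : b ⟨0, hm⟩ = 0) (hbmono : Antitone b)
    (hs : ∀ l : Fin m, 0 < ∑ j ∈ Finset.Iic l, s j ∧ ∑ j ∈ Finset.Iic l, s j < k)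
    (f : ℝ → ℝ) (hf : ∀ v, f v = ∑ j, s j * max (v + b j) 0) :
    (∀ v ≤ (0 : ℝ), f v = 0) ∧
    Monotone f ∧
    ∀ v₁ v₂ : ℝ, 0 ≤ v₁ → v₁ < v₂ →
      (∀ j, b j ∉ Set.Ioo (-v₂) (-v₁)) →
      (f v₂ - f v₁) / (v₂ - v₁) < k := by
  have hb0 : ∀ j : Fin m, b j ≤ 0 := by
    intro j
    have h0 : (⟨0, hm⟩ : Fin m) ≤ j := by simp [Fin.le_def]
    have := hbmono h0
    rwa [hb1] at this
  have hdiff : ∀ v₁ v₂ : ℝ,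
      f v₂ - f v₁ = ∑ j, s j * (max (v₂ + b j) 0 - max (v₁ + b j) 0) := by
    intro v₁ v₂
    rw [hf, hf, ← Finset.sum_sub_distrib]
    exact Finset.sum_congr rfl (fun j _ => by ring)
  refine ⟨?_, ?_, ?_⟩
  · intro v hv
    rw [hf]
    apply Finset.sum_eq_zero
    intro j _
    have : v + b j ≤ 0 := by linarith [hb0 j]
    rw [max_eq_right this, mul_zero]
  · intro v₁ v₂ hv
    have key : 0 ≤ f v₂ - f v₁ := by
      rw [hdiff]
      set S' : ℕ → ℝ := fun j => if h : j < m then s ⟨j,h⟩ else 0 with hS'def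
      set D' : ℕ → ℝ := fun j =>
        if h : j < m then max (v₂ + b ⟨j,h⟩) 0 - max (v₁ + b ⟨j,h⟩) 0 else 0 with hD'def
      have hS' : ∀ l, l < m → 0 < ∑ j ∈ Finset.range (l+1), S' j := by
        intro l hl
        rw [hS'def, sum_range_eq_sum_Iic s l hl]
        exact (hs ⟨l,hl⟩).1
      have hD0 : ∀ j, 0 ≤ D' j := by
        intro j
        rw [hD'def]
        dsimp only
        split
        · have : max (v₁ + b ⟨j,‹_›⟩) 0 ≤ max (v₂ + b ⟨j,‹_›⟩) 0 :=
            max_le_max (by linarith) le_rfl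
          linarith
        · exact le_rfl
      have hDanti : ∀ i j, i ≤ j → j < m → D' j ≤ D' i := by
        intro i j hij hj
        have hi : i < m := lt_of_le_of_lt hij hj
        rw [hD'def]
        simp only [hi, hj, dif_pos]
        exact relu_diff_mono v₁ v₂ (b ⟨j,hj⟩) (b ⟨i,hi⟩) hv
          (hbmono (by simp [Fin.le_def, hij]))
      have habel := abel_nonneg S' D' m hm hDanti hS'
      have hsum : ∑ j, s j * (max (v₂ + b j) 0 - max (v₁ + b j) 0)
          = ∑ j ∈ Finset.range m, S' j * D' j := by
        rw [← Fin.sum_univ_eq_sum_range (fun j => S' j * D' j) m]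
        refine Finset.sum_congr rfl (fun i _ => ?_)
        rw [hS'def, hD'def]
        simp [i.2]
      rw [hsum]
      calc (0:ℝ) ≤ D' (m-1) * ∑ j ∈ Finset.range m, S' j :=
            mul_nonneg (hD0 _) (le_of_lt (by
              have := hS' (m-1) (by omega)
              rwa [Nat.sub_add_cancel hm] at this))
        _ ≤ _ := habel
    linarith [key]
  · intro v₁ v₂ hv₁ hlt hreg
    have hne : (Finset.univ.filter (fun j : Fin m => -v₁ ≤ b j)).Nonempty := by
      refine ⟨⟨0, hm⟩, ?_⟩
      simp [hb1]; linarith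
    set L := (Finset.univ.filter (fun j : Fin m => -v₁ ≤ b j)).max' hne with hL
    have hmemL : -v₁ ≤ b L := by
      have := Finset.max'_mem _ hne
      rw [← hL] at this
      exact (Finset.mem_filter.mp this).2
    have hiff : ∀ j : Fin m, j ≤ L ↔ -v₁ ≤ b j := by
      intro j
      constructor
      · intro h
        have := hbmono h
        linarith
      · intro h
        exact Finset.le_max' _ j (Finset.mem_filter.mpr ⟨Finset.mem_univ _, h⟩)
    have hterm : ∀ j : Fin m,
        s j * (max (v₂ + b j) 0 - max (v₁ + b j) 0)
          = if j ≤ L then s j * (v₂ - v₁) else 0 := by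
      intro j
      by_cases h : j ≤ L
      · have hb : -v₁ ≤ b j := (hiff j).mp h
        rw [if_pos h, max_eq_left (by linarith), max_eq_left (by linarith)]
        ring
      · have hb : b j < -v₁ := by
          by_contra hc
          exact h ((hiff j).mpr (le_of_not_gt hc))
        have hb2 : b j ≤ -v₂ := by
          by_contra hc
          exact hreg j ⟨lt_of_not_ge hc, hb⟩
        rw [if_neg h, max_eq_right (by linarith), max_eq_right (by linarith)]
        ring
    have hsum : f v₂ - f v₁ = (∑ j ∈ Finset.Iic L, s j) * (v₂ - v₁) := by
      rw [hdiff, Finset.sum_congr rfl (fun j _ => hterm j)]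
      rw [← Finset.sum_filter]
      rw [show Finset.univ.filter (fun j : Fin m => j ≤ L) = Finset.Iic L from by
        ext j; simp]
      rw [Finset.sum_mul]
    rw [hsum, mul_div_assoc, div_self (by linarith : v₂ - v₁ ≠ 0), mul_one]
    exact (hs L).2
end
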